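/- Every countable torsion-free abelian group belongs to the class 𝔉. -/

import Mathlib

/-- The closure properties defining the bootstrap class `𝔉` of countable discrete groups:
it contains the trivial group, and is closed under isomorphism, countable directed
unions of subgroups, and extensions by `ℤ`. -/
structure IsFrakCClosed (C : ∀ (G : Type) [Group G], Prop) : Prop where
  /-- `C` contains the trivial group. -/
  triv : C PUnit
  /-- `C` is closed under isomorphism of groups. -/
  iso : ∀ (G H : Type) [Group G] [Group H], (G ≃* H) → C G → C H
  /-- `C` is closed under countable directed unions: if `G` is the union of a countable
  directed family of subgroups each belonging to `C`, then `G` belongs to `C`. -/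
  union : ∀ (G : Type) [Group G] (ι : Type) [Countable ι] (K : ι → Subgroup G),
    Directed (· ≤ ·) K → (∀ i, C (K i)) → (∀ g : G, ∃ i, g ∈ K i) → C G
  /-- `C` is closed under extensions by `ℤ`: if `G` has a normal subgroup `N` belonging
  to `C` with `G ⧸ N ≅ ℤ`, then `G` belongs to `C`. -/
  extZ : ∀ (G : Type) [Group G] (N : Subgroup G) [N.Normal],
    C N → ((G ⧸ N) ≃* Multiplicative ℤ) → C G

/-- Membership in the smallest class `𝔉` of groups containing the trivial group and closed
under isomorphism, countable directed unions, and extensions by `ℤ`. -/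
def MemFrakC (G : Type) [Group G] : Prop :=
  ∀ C : ∀ (G : Type) [Group G], Prop, IsFrakCClosed C → C G

/-! A countable torsion-free abelian group is the directed union of its finitely generated
subgroups, and each of these is free abelian of finite rank, i.e. isomorphic to `ℤⁿ`.
Finally `ℤⁿ⁺¹ ≅ ℤ × ℤⁿ` is an extension of `ℤ` by `ℤⁿ`, so `ℤⁿ ∈ 𝔉` by induction on `n`. -/

namespace MemFrakC

lemma of_mulEquiv {G H : Type} [Group G] [Group H] (e : G ≃* H) (hG : MemFrakC G) :
    MemFrakC H :=
  fun C hC => hC.iso G H e (hG C hC)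

lemma of_surjective_toInt {G : Type} [Group G] (f : G →* Multiplicative ℤ)
    (hf : Function.Surjective f) (hker : MemFrakC f.ker) : MemFrakC G :=
  fun C hC => hC.extZ G f.ker (hker C hC) (QuotientGroup.quotientKerEquivOfSurjective f hf)

lemma of_forall_finset_closure {G : Type} [Group G] [Countable G]
    (h : ∀ S : Finset G, MemFrakC (Subgroup.closure (S : Set G))) : MemFrakC G := by
  intro C hC
  refine hC.union G (Finset G) (fun S => Subgroup.closure (S : Set G)) ?_ (fun S => h S C hC) ?_
  · exact Monotone.directed_le fun S T hST => Subgroup.closure_mono (Finset.coe_subset.mpr hST)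
  · exact fun g => ⟨{g}, Subgroup.subset_closure (Finset.mem_singleton_self g)⟩

lemma multiplicativeInt_prod {G : Type} [Group G] (hG : MemFrakC G) :
    MemFrakC (Multiplicative ℤ × G) := by
  refine of_surjective_toInt (MonoidHom.fst _ G) Prod.fst_surjective (of_mulEquiv ?_ hG)
  exact ((Subgroup.topEquiv.symm.trans MulEquiv.uniqueProd.symm).trans
    (Subgroup.prodEquiv ⊥ ⊤).symm).trans (MulEquiv.subgroupCongr MonoidHom.ker_fst.symm)

lemma multiplicative_fin_int : ∀ n : ℕ, MemFrakC (Multiplicative (Fin n → ℤ))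
  | 0 => fun _ hC => hC.iso PUnit _ MulEquiv.ofUnique hC.triv
  | n + 1 => of_mulEquiv
      ((MulEquiv.prodMultiplicative ℤ (Fin n → ℤ)).symm.trans
        (AddEquiv.toMultiplicative (Fin.consLinearEquiv ℤ fun _ => ℤ).toAddEquiv))
      (multiplicativeInt_prod (multiplicative_fin_int n))

lemma of_fg_of_isMulTorsionFree (H : Type) [CommGroup H] [Group.FG H] [IsMulTorsionFree H] :
    MemFrakC H :=
  of_mulEquiv
    (AddEquiv.toMultiplicativeRight (Module.finBasis ℤ (Additive H)).equivFun.toAddEquiv).symm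
    (multiplicative_fin_int _)

end MemFrakC

theorem memFrakC_of_countable_torsionFree_abelian
    (G : Type) [CommGroup G] [Countable G]
    (htf : ∀ (g : G) (m : ℕ), 1 ≤ m → g ^ m = 1 → g = 1) :
    MemFrakC G := by
  have : IsMulTorsionFree G := IsMulTorsionFree.of_not_isOfFinOrder fun g hg hfin => by
    obtain ⟨m, hm, hgm⟩ := isOfFinOrder_iff_pow_eq_one.mp hfin
    exact hg (htf g m hm hgm)
  exact MemFrakC.of_forall_finset_closure fun S => MemFrakC.of_fg_of_isMulTorsionFree _
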